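/- arXiv:2005.01665 — 3 statements merged into one kernel-verified Lean document; each statement's English description precedes it below -/
import Mathlib

section
/- Shifted Shannon–Whittaker formula: let f : ℝ → ℂ be an integrable function supported in [−1/2, 1/2] (with f ∈ L²). Then for every ξ ∈ ℝ, f̂(ξ) = Σ_{k ∈ ℤ} f̂(k − 1/2) · sin(π(ξ − k + 1/2)) / (π(ξ − k + 1/2)), where the term with ξ = k − 1/2 is interpreted as f̂(k − 1/2). -/
/-!
On `[-1/2, 1/2]` the function `g(x) = e^{πix} f(x)` has Fourier coefficients `f̂(k - 1/2)`, and
`f̂(ξ)` is the `L²` pairing of `g` with `e^{2πi(ξ + 1/2)x}`, whose Fourier coefficients on the same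
interval are the sinc values. Parseval's identity for the pairing of two `L²` functions on an
interval is therefore exactly the shifted sampling formula.
-/

open MeasureTheory FourierTransform Real Complex AddCircle ComplexConjugate

theorem hasSum_conj_fourierCoeff_mul_fourierCoeff {T : ℝ} [hT : Fact (0 < T)]
    (F G : Lp ℂ 2 (@haarAddCircle T hT)) :
    HasSum (fun n => conj (fourierCoeff F n) * fourierCoeff G n) (inner ℂ F G) := by
  refine (fourierBasis.hasSum_inner_mul_inner F G).congr_fun fun n => ?_
  rw [← fourierBasis_repr, ← fourierBasis_repr, fourierBasis.repr_apply_apply,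
    fourierBasis.repr_apply_apply, inner_conj_symm]

theorem hasSum_conj_fourierCoeffOn_mul_fourierCoeffOn {a b : ℝ} (hab : a < b) {f g : ℝ → ℂ}
    (hf : MemLp f 2 (volume.restrict (Set.Ioc a b)))
    (hg : MemLp g 2 (volume.restrict (Set.Ioc a b))) :
    HasSum (fun n => conj (fourierCoeffOn hab f n) * fourierCoeffOn hab g n)
      ((b - a)⁻¹ • ∫ x in a..b, conj (f x) * g x) := by
  have := Fact.mk (sub_pos.mpr hab)
  rw [← add_sub_cancel a b] at hf hg
  have hF := hf.memLp_liftIoc.haarAddCircle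
  have hG := hg.memLp_liftIoc.haarAddCircle
  convert hasSum_conj_fourierCoeff_mul_fourierCoeff (hF.toLp _) (hG.toLp _) using 1
  · simp [fourierCoeff_congr_ae hF.coeFn_toLp, fourierCoeff_congr_ae hG.coeFn_toLp,
      fourierCoeff_liftIoc_eq]
  · have hprod : (fun t => inner ℂ (hF.toLp _ t) (hG.toLp _ t)) =ᵐ[haarAddCircle]
        liftIoc (b - a) a (fun x => conj (f x) * g x) := by
      filter_upwards [hF.coeFn_toLp, hG.coeFn_toLp] with t hFt hGt
      rw [RCLike.inner_apply, hFt, hGt]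
      exact mul_comm _ _
    rw [L2.inner_def, integral_congr_ae hprod, integral_haarAddCircle,
      integral_liftIoc_eq_intervalIntegral, add_sub_cancel]

theorem fourier_eq_intervalIntegral_of_support_subset {E : Type*} [NormedAddCommGroup E]
    [NormedSpace ℂ E] {f : ℝ → E} {a b : ℝ} (hab : a ≤ b)
    (hsupp : Function.support f ⊆ Set.Icc a b) (ξ : ℝ) :
    𝓕 f ξ = ∫ x in a..b, cexp (-(2 * π * I * ξ * x)) • f x := by
  have hzero : ∀ x ∉ Set.Icc a b, cexp (-(2 * π * I * ξ * x)) • f x = 0 := fun x hx => by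
    rw [Function.notMem_support.mp (fun h => hx (hsupp h)), smul_zero]
  have hexp (x : ℝ) : cexp (↑(-2 * π * x * ξ) * I) = cexp (-(2 * π * I * ξ * x)) := by
    push_cast
    ring_nf
  simp_rw [fourier_real_eq_integral_exp_smul, hexp]
  rw [← setIntegral_eq_integral_of_forall_compl_eq_zero hzero, integral_Icc_eq_integral_Ioc,
    ← intervalIntegral.integral_of_le hab]

theorem intervalIntegral_conj_exp_mul_exp_mul_eq_fourier {f : ℝ → ℂ} {a b : ℝ} (hab : a ≤ b)
    (hsupp : Function.support f ⊆ Set.Icc a b) (s c : ℝ) :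
    ∫ x in a..b, conj (cexp (2 * π * I * s * x)) * (cexp (2 * π * I * c * x) * f x) =
      𝓕 f (s - c) := by
  rw [fourier_eq_intervalIntegral_of_support_subset hab hsupp]
  congr 1 with x
  rw [← mul_assoc, ← exp_conj, ← Complex.exp_add, smul_eq_mul]
  congr 2
  simp only [map_mul, conj_ofReal, conj_I, map_ofNat]
  push_cast
  ring

theorem fourierCoeffOn_exp_mul_eq_fourier {f : ℝ → ℂ} {a b : ℝ} (hab : a < b)
    (hsupp : Function.support f ⊆ Set.Icc a b) (c : ℝ) (n : ℤ) :
    fourierCoeffOn hab (fun x => cexp (2 * π * I * c * x) * f x) n =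
      (b - a)⁻¹ • 𝓕 f (n / (b - a) - c) := by
  have := Fact.mk (sub_pos.mpr hab)
  rw [fourierCoeffOn_eq_integral, one_div,
    ← intervalIntegral_conj_exp_mul_exp_mul_eq_fourier hab.le hsupp]
  congr 2 with x
  rw [fourier_neg, fourier_coe_apply, smul_eq_mul]
  push_cast
  ring_nf

theorem fourierCoeffOn_exp {a b : ℝ} (hab : a < b) (s : ℝ) (n : ℤ) :
    fourierCoeffOn hab (fun x => cexp (2 * π * I * s * x)) n =
      (b - a)⁻¹ • ∫ x in a..b, cexp (2 * π * I * ((s - n / (b - a) : ℝ) : ℂ) * x) := by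
  have := Fact.mk (sub_pos.mpr hab)
  rw [fourierCoeffOn_eq_integral, one_div]
  congr 2 with x
  rw [fourier_coe_apply, smul_eq_mul, ← Complex.exp_add]
  push_cast
  ring_nf

theorem integral_exp_two_pi_mul_I_neg_half_half (c : ℝ) :
    ∫ x in -(1 / 2)..(1 / 2), cexp (2 * π * I * c * x) =
      ((if c = 0 then 1 else Real.sin (π * c) / (π * c) : ℝ) : ℂ) := by
  split_ifs with hc
  · norm_num [hc]
  · have hc' : (2 * π * I * c : ℂ) ≠ 0 := by simp [hc, pi_ne_zero]
    have hπc : (π * c : ℂ) ≠ 0 := by simp [hc, pi_ne_zero]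
    rw [integral_exp_mul_complex hc']
    push_cast
    rw [Complex.sin, div_eq_div_iff hc' hπc]
    ring_nf
    rw [I_sq]
    ring

theorem norm_exp_two_pi_mul_I (s x : ℝ) : ‖cexp (2 * π * I * s * x)‖ = 1 := by
  rw [norm_exp]
  simp

theorem stmt5_general (f : ℝ → ℂ)
    (hf2 : MemLp f 2 (volume : Measure ℝ))
    (hsupp : Function.support f ⊆ Set.Icc (-(1 / 2) : ℝ) (1 / 2)) :
    ∀ ξ : ℝ,
      HasSum (fun k : ℤ =>
          𝓕 f ((k : ℝ) - 1 / 2) *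
            (if ξ = (k : ℝ) - 1 / 2 then 1 else
              (Real.sin (π * (ξ - (k : ℝ) + 1 / 2)) / (π * (ξ - (k : ℝ) + 1 / 2)) : ℝ)))
        (𝓕 f ξ) := by
  intro ξ
  have hab : -(1 / 2 : ℝ) < 1 / 2 := by norm_num
  have hlen : (1 / 2 : ℝ) - -(1 / 2) = 1 := by norm_num
  have hchar_cont (s : ℝ) : Continuous fun x : ℝ => cexp (2 * π * I * s * x) := by fun_prop
  have hchar : MemLp (fun x : ℝ => cexp (2 * π * I * ↑(ξ + 1 / 2) * x)) 2
      (volume.restrict (Set.Ioc (-(1 / 2)) (1 / 2))) :=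
    .of_bound (hchar_cont _).aestronglyMeasurable 1
      (ae_of_all _ fun x => (norm_exp_two_pi_mul_I _ x).le)
  have hmod : MemLp (fun x : ℝ => cexp (2 * π * I * ↑(1 / 2 : ℝ) * x) * f x) 2
      (volume.restrict (Set.Ioc (-(1 / 2)) (1 / 2))) :=
    (hf2.restrict _).of_le ((hchar_cont _).aestronglyMeasurable.mul hf2.1.restrict)
      (ae_of_all _ fun x => by rw [norm_mul, norm_exp_two_pi_mul_I, one_mul])
  have hparseval := hasSum_conj_fourierCoeffOn_mul_fourierCoeffOn hab hchar hmod
  rw [intervalIntegral_conj_exp_mul_exp_mul_eq_fourier hab.le hsupp, hlen, inv_one, one_smul,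
    add_sub_cancel_right] at hparseval
  refine hparseval.congr_fun fun k => ?_
  have hcond : ξ - k + 1 / 2 = 0 ↔ ξ = k - 1 / 2 := by constructor <;> intro h <;> linarith
  rw [fourierCoeffOn_exp_mul_eq_fourier hab hsupp, fourierCoeffOn_exp, hlen,
    show ξ + 1 / 2 - k / 1 = ξ - k + 1 / 2 by ring, integral_exp_two_pi_mul_I_neg_half_half]
  simp only [hcond, div_one, inv_one, one_smul, conj_ofReal, mul_comm]

/-- **Shifted Shannon–Whittaker formula.** If `f : ℝ → ℂ` is integrable, lies in `L²`, and is
supported in `[-1/2, 1/2]`, then for every `ξ`,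
`f̂(ξ) = Σ_{k ∈ ℤ} f̂(k - 1/2) · sin(π(ξ - k + 1/2)) / (π(ξ - k + 1/2))`,
where the term with `ξ = k - 1/2` is interpreted as `f̂(k - 1/2)`. -/
theorem stmt5 (f : ℝ → ℂ) (hf1 : Integrable f)
    (hf2 : MemLp f 2 (volume : Measure ℝ))
    (hsupp : Function.support f ⊆ Set.Icc (-(1 / 2) : ℝ) (1 / 2)) :
    ∀ ξ : ℝ,
      HasSum (fun k : ℤ =>
          𝓕 f ((k : ℝ) - 1 / 2) *
            (if ξ = (k : ℝ) - 1 / 2 then 1 else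
              (Real.sin (π * (ξ - (k : ℝ) + 1 / 2)) / (π * (ξ - (k : ℝ) + 1 / 2)) : ℝ)))
        (𝓕 f ξ) :=
  stmt5_general f hf2 hsupp
end

section
/- Let α ∈ {2, 3, 4, 5, 6}. For every integer k ≥ 1, the quantity b_k = ∫_{−1/2}^{1/2} (1 − |2x|^α) cos(π(2k − 1)x) dx satisfies b_k > 0 if k is odd and b_k < 0 if k is even. -/
/-!
After the substitution `t = 2x` and folding by evenness, `b_k = ∫₀¹ (1 - tⁿ) cos (ω t) dt` with
`n = α` and `ω = (k - 1/2)π`, so that `cos ω = 0` and `sin ω = (-1)^(k+1)`. Integrating by parts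
twice gives `b_k = n(n-1)/ω² · J_{n-2}` for the moments `J_m = ∫₀¹ tᵐ cos (ω t) dt`, which obey
`J_{m+2} = sin ω / ω - (m+2)(m+1)/ω² · J_m`. Hence `sin ω · J_m` is an explicit rational function
of `ω` for `m ≤ 4`, and its numerator is positive both at `ω = π/2` (the case `k = 1`) and for
`ω ≥ 4` (all `k ≥ 2`). At `ω = π/2` and `m = 4` the margin is thin: `ω⁴ - 12ω² + 24` vanishes at
`ω² = 6 - 2√3 ≈ 2.54`, just above `(π/2)² ≈ 2.47`.
-/

open Real intervalIntegral

theorem integral_neg_self_of_even {E : Type*} [NormedAddCommGroup E] [NormedSpace ℝ E]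
    {f : ℝ → E} {a : ℝ} (hf : ∀ x, f (-x) = f x)
    (hint : IntervalIntegrable f MeasureTheory.volume (-a) a) :
    ∫ x in -a..a, f x = (2 : ℝ) • ∫ x in 0..a, f x := by
  have h0 : (0 : ℝ) ∈ Set.uIcc (-a) a := by
    rw [Set.mem_uIcc]; rcases le_total 0 a with h | h <;> [left; right] <;> constructor <;> linarith
  have hneg : ∫ x in -a..0, f x = ∫ x in 0..a, f x := by
    simpa [hf] using (integral_comp_neg (a := 0) (b := a) f).symm
  rw [← integral_add_adjacent_intervals (hint.mono_set (Set.uIcc_subset_uIcc_left h0))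
    (hint.mono_set (Set.uIcc_subset_uIcc_right h0)), hneg, two_smul]

noncomputable def cosMoment (ω : ℝ) (m : ℕ) : ℝ := ∫ t in (0 : ℝ)..1, t ^ m * cos (ω * t)

noncomputable def sinMoment (ω : ℝ) (m : ℕ) : ℝ := ∫ t in (0 : ℝ)..1, t ^ m * sin (ω * t)

section Moments

variable {ω : ℝ}

theorem cosMoment_zero (hω : ω ≠ 0) : cosMoment ω 0 = sin ω / ω := by
  simp [cosMoment, hω, div_eq_inv_mul]

theorem sinMoment_zero (hω : ω ≠ 0) : sinMoment ω 0 = (1 - cos ω) / ω := by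
  simp [sinMoment, hω, div_eq_inv_mul]

theorem cosMoment_succ (hω : ω ≠ 0) (m : ℕ) :
    cosMoment ω (m + 1) = sin ω / ω - (m + 1) / ω * sinMoment ω m := by
  have hu : ∀ t ∈ Set.uIcc (0 : ℝ) 1, HasDerivAt (· ^ (m + 1)) ((m + 1) * t ^ m) t := fun t _ => by
    simpa using hasDerivAt_pow (m + 1) t
  have hv : ∀ t ∈ Set.uIcc (0 : ℝ) 1, HasDerivAt (fun s => sin (ω * s) / ω) (cos (ω * t)) t :=
    fun t _ => by simpa [hω] using ((hasDerivAt_id t).const_mul ω).sin.div_const ω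
  have hrest : ∫ t in (0 : ℝ)..1, (m + 1) * t ^ m * (sin (ω * t) / ω) =
      ∫ t in (0 : ℝ)..1, (m + 1) / ω * (t ^ m * sin (ω * t)) :=
    integral_congr fun t _ => by ring
  rw [cosMoment, integral_mul_deriv_eq_deriv_mul hu hv
    ((by fun_prop : Continuous _).intervalIntegrable _ _)
    ((by fun_prop : Continuous _).intervalIntegrable _ _), hrest,
    integral_const_mul, sinMoment]
  simp

theorem sinMoment_succ (hω : ω ≠ 0) (m : ℕ) :
    sinMoment ω (m + 1) = -cos ω / ω + (m + 1) / ω * cosMoment ω m := by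
  have hu : ∀ t ∈ Set.uIcc (0 : ℝ) 1, HasDerivAt (· ^ (m + 1)) ((m + 1) * t ^ m) t := fun t _ => by
    simpa using hasDerivAt_pow (m + 1) t
  have hv : ∀ t ∈ Set.uIcc (0 : ℝ) 1, HasDerivAt (fun s => -cos (ω * s) / ω) (sin (ω * t)) t :=
    fun t _ => by simpa [hω] using ((hasDerivAt_id t).const_mul ω).cos.neg.div_const ω
  have hrest : ∫ t in (0 : ℝ)..1, (m + 1) * t ^ m * (-cos (ω * t) / ω) =
      ∫ t in (0 : ℝ)..1, -((m + 1) / ω * (t ^ m * cos (ω * t))) :=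
    integral_congr fun t _ => by ring
  rw [sinMoment, integral_mul_deriv_eq_deriv_mul hu hv
    ((by fun_prop : Continuous _).intervalIntegrable _ _)
    ((by fun_prop : Continuous _).intervalIntegrable _ _), hrest, integral_neg,
    integral_const_mul, cosMoment]
  simp

theorem cosMoment_add_two (hω : ω ≠ 0) (hcos : cos ω = 0) (m : ℕ) :
    cosMoment ω (m + 2) = sin ω / ω - (m + 2) * (m + 1) / ω ^ 2 * cosMoment ω m := by
  rw [cosMoment_succ hω, sinMoment_succ hω, hcos]
  push_cast
  field_simp
  ring

theorem integral_one_sub_pow_mul_cos (hω : ω ≠ 0) (hcos : cos ω = 0) (m : ℕ) :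
    ∫ t in (0 : ℝ)..1, (1 - t ^ (m + 2)) * cos (ω * t) =
      (m + 2) * (m + 1) / ω ^ 2 * cosMoment ω m := by
  have hsplit : ∫ t in (0 : ℝ)..1, (1 - t ^ (m + 2)) * cos (ω * t) =
      cosMoment ω 0 - cosMoment ω (m + 2) := by
    rw [cosMoment, cosMoment, ← integral_sub
      ((by fun_prop : Continuous _).intervalIntegrable _ _)
      ((by fun_prop : Continuous _).intervalIntegrable _ _)]
    exact integral_congr fun t _ => by ring
  rw [hsplit, cosMoment_add_two hω hcos, cosMoment_zero hω]
  ring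

theorem sin_mul_cosMoment_eq (hω : ω ≠ 0) (hcos : cos ω = 0) :
    sin ω * cosMoment ω 0 = 1 / ω ∧
    sin ω * cosMoment ω 1 = (ω - sin ω) / ω ^ 2 ∧
    sin ω * cosMoment ω 2 = (ω ^ 2 - 2) / ω ^ 3 ∧
    sin ω * cosMoment ω 3 = (ω ^ 3 - 6 * ω + 6 * sin ω) / ω ^ 4 ∧
    sin ω * cosMoment ω 4 = (ω ^ 4 - 12 * ω ^ 2 + 24) / ω ^ 5 := by
  have hsin : sin ω ^ 2 = 1 := by nlinarith [sin_sq_add_cos_sq ω]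
  have h0 := cosMoment_zero hω
  have h1 : cosMoment ω 1 = sin ω / ω - 1 / ω ^ 2 := by
    rw [cosMoment_succ hω, sinMoment_zero hω, hcos]; field_simp; ring
  have h2 := cosMoment_add_two hω hcos 0
  have h3 := cosMoment_add_two hω hcos 1
  have h4 := cosMoment_add_two hω hcos 2
  norm_num at h2 h3 h4
  rw [h0] at h2
  rw [h1] at h3
  rw [h2] at h4
  refine ⟨?_, ?_, ?_, ?_, ?_⟩
  · rw [h0]; field_simp; linear_combination hsin
  · rw [h1]; field_simp; linear_combination ω * hsin
  · rw [h2]; field_simp; linear_combination (ω ^ 2 - 2) * hsin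
  · rw [h3]; field_simp; linear_combination (ω ^ 3 - 6 * ω) * hsin
  · rw [h4]; field_simp; linear_combination (ω ^ 4 - 12 * ω ^ 2 + 24) * hsin

theorem sin_mul_cosMoment_pos (hcos : cos ω = 0) (hω : ω = π / 2 ∨ 4 ≤ ω) {m : ℕ}
    (hm : m ≤ 4) : 0 < sin ω * cosMoment ω m := by
  have hpos : 0 < ω := by
    rcases hω with h | h
    · rw [h]; positivity
    · linarith
  obtain ⟨h0, h1, h2, h3, h4⟩ := sin_mul_cosMoment_eq hpos.ne' hcos
  have hsq : 0 < ω ^ 2 := by positivity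
  rcases hω with hω | hω
  · have hs : sin ω = 1 := by rw [hω, sin_pi_div_two]
    have hlo : 1.57 < ω := by linarith [pi_gt_d2]
    have hhi : ω < 1.575 := by linarith [pi_lt_d2]
    interval_cases m
    · rw [h0]; positivity
    · rw [h1]; exact div_pos (by linarith) hsq
    · rw [h2]; exact div_pos (by nlinarith) (by positivity)
    · rw [h3]
      exact div_pos (by nlinarith [mul_pos (sub_pos.2 hlo) (sub_pos.2 hlo)]) (by positivity)
    · rw [h4]; exact div_pos (by nlinarith [mul_pos (sub_pos.2 hhi) hsq]) (by positivity)
  · have h16 : 16 ≤ ω ^ 2 := by nlinarith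
    interval_cases m
    · rw [h0]; positivity
    · rw [h1]; exact div_pos (by linarith [sin_le_one ω]) hsq
    · rw [h2]; exact div_pos (by nlinarith) (by positivity)
    · rw [h3]
      exact div_pos (by nlinarith [neg_one_le_sin ω, mul_le_mul_of_nonneg_left h16 hpos.le])
        (by positivity)
    · rw [h4]; exact div_pos (by nlinarith [mul_le_mul_of_nonneg_left h16 hsq.le]) (by positivity)

end Moments

theorem cos_nat_mul_pi_sub_pi_div_two (k : ℕ) : cos (k * π - π / 2) = 0 := by
  rw [cos_nat_mul_pi_sub, cos_pi_div_two, mul_zero]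

theorem neg_one_pow_mul_cosMoment_pos {k m : ℕ} (hk : 1 ≤ k) (hm : m ≤ 4) :
    0 < (-1) ^ (k + 1) * cosMoment (k * π - π / 2) m := by
  have hsin : sin (k * π - π / 2) = (-1) ^ (k + 1) := by
    rw [sin_nat_mul_pi_sub, sin_pi_div_two]; ring
  rw [← hsin]
  refine sin_mul_cosMoment_pos (cos_nat_mul_pi_sub_pi_div_two k) ?_ hm
  rcases hk.eq_or_lt with rfl | hk2
  · left; ring
  · right
    have : (2 : ℝ) ≤ k := by exact_mod_cast hk2
    nlinarith [pi_gt_three]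

theorem integral_one_sub_abs_two_mul_rpow_mul_cos (n : ℕ) (c : ℝ) :
    ∫ x in -(1 / 2 : ℝ)..(1 / 2), (1 - |2 * x| ^ (n : ℝ)) * cos (c * x) =
      ∫ t in (0 : ℝ)..1, (1 - t ^ n) * cos (c / 2 * t) := by
  set g : ℝ → ℝ := fun t => (1 - |t| ^ n) * cos (c / 2 * t)
  have hg : ∀ x, (1 - |2 * x| ^ (n : ℝ)) * cos (c * x) = g (2 * x) := fun x => by
    simp only [g, rpow_natCast]; ring_nf
  have heven : ∀ t, g (-t) = g t := fun t => by simp only [g, abs_neg, mul_neg, cos_neg]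
  simp_rw [hg]
  rw [integral_comp_mul_left g two_ne_zero, show 2 * (1 / 2 : ℝ) = 1 by norm_num,
    show 2 * -(1 / 2 : ℝ) = -1 by norm_num,
    integral_neg_self_of_even heven ((by fun_prop : Continuous g).intervalIntegrable _ _),
    smul_smul, inv_mul_cancel₀ two_ne_zero, one_smul]
  refine integral_congr fun t ht => ?_
  rw [Set.uIcc_of_le zero_le_one] at ht
  simp only [g, abs_of_nonneg ht.1]

/-- For `α ∈ {2,3,4,5,6}` and every integer `k ≥ 1`, the quantity
`b_k = ∫_{-1/2}^{1/2} (1-|2x|^α) cos(π(2k-1)x) dx` is positive for odd `k` and negative for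
even `k`. -/
theorem stmt12 (α : ℝ) (hα : α ∈ ({2, 3, 4, 5, 6} : Set ℝ)) (k : ℕ) (hk : 1 ≤ k) :
    (Odd k →
      0 < ∫ x in (-(1 / 2) : ℝ)..(1 / 2), (1 - |2 * x| ^ α) * Real.cos (π * (2 * (k : ℝ) - 1) * x)) ∧
    (Even k →
      (∫ x in (-(1 / 2) : ℝ)..(1 / 2), (1 - |2 * x| ^ α) * Real.cos (π * (2 * (k : ℝ) - 1) * x)) < 0) := by
  obtain ⟨m, hm, rfl⟩ : ∃ m : ℕ, m ≤ 4 ∧ α = ((m + 2 : ℕ) : ℝ) := by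
    simp only [Set.mem_insert_iff, Set.mem_singleton_iff] at hα
    rcases hα with rfl | rfl | rfl | rfl | rfl
    exacts [⟨0, by norm_num⟩, ⟨1, by norm_num⟩, ⟨2, by norm_num⟩, ⟨3, by norm_num⟩,
      ⟨4, by norm_num⟩]
  have hk' : (1 : ℝ) ≤ k := by exact_mod_cast hk
  have hω_pos : 0 < k * π - π / 2 := by nlinarith [pi_pos]
  rw [integral_one_sub_abs_two_mul_rpow_mul_cos,
    show π * (2 * (k : ℝ) - 1) / 2 = k * π - π / 2 by ring,
    integral_one_sub_pow_mul_cos hω_pos.ne' (cos_nat_mul_pi_sub_pi_div_two k)]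
  have hfactor : 0 < ((m : ℝ) + 2) * (m + 1) / (k * π - π / 2) ^ 2 := by positivity
  have hsign := neg_one_pow_mul_cosMoment_pos hk hm
  constructor
  · intro hodd
    rw [hodd.add_one.neg_one_pow, one_mul] at hsign
    exact mul_pos hfactor hsign
  · intro heven
    rw [heven.add_one.neg_one_pow, neg_one_mul, neg_pos] at hsign
    exact mul_neg_of_pos_of_neg hfactor hsign
end

section
/- Let u = χ_{[−1/2,1/2]} (the indicator function of [−1/2, 1/2]) and let f : ℝ → ℝ be a smooth even function supported in [−1/2, 1/2]. Then the one-sided limit lim_{ε→0⁺} ( ‖ ξ · (û(ξ) + ε f̂(ξ)) ‖_{L^∞(ℝ)} − 1/π ) / ε = M(f), where M(f) = max{ sup_{k ∈ ℕ₀} (2k + 1/2) f̂(2k + 1/2), − inf_{k ∈ ℕ₀} (2k + 3/2) f̂(2k + 3/2) }. -/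
open MeasureTheory FourierTransform Real Filter

/-- The quantity `M(f) = max { sup_k (2k+1/2) f̂(2k+1/2), - inf_k (2k+3/2) f̂(2k+3/2) }`
for a real-valued `f` (whose Fourier transform is real-valued when `f` is even). -/
noncomputable def maxHat (f : ℝ → ℝ) : ℝ :=
  max (⨆ k : ℕ, (2 * (k : ℝ) + 1 / 2) * (𝓕 (fun x : ℝ => (f x : ℂ)) (2 * (k : ℝ) + 1 / 2)).re)
      (-(⨅ k : ℕ, (2 * (k : ℝ) + 3 / 2) * (𝓕 (fun x : ℝ => (f x : ℂ)) (2 * (k : ℝ) + 3 / 2)).re))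


noncomputable section

open Complex Topology

namespace Stmt18aux

def u : ℝ → ℂ := fun x => Set.indicator (Set.Icc (-(1 / 2) : ℝ) (1 / 2)) (fun _ => (1 : ℂ)) x

lemma hu_int : Integrable u := by
  unfold u
  rw [integrable_indicator_iff measurableSet_Icc]
  exact integrableOn_const measure_Icc_lt_top.ne

lemma sinc (ξ : ℝ) : (ξ : ℂ) * 𝓕 u ξ = ((Real.sin (π * ξ) / π : ℝ) : ℂ) := by
  rcases eq_or_ne ξ 0 with rfl | hξ
  · simp
  have hπ : (π : ℂ) ≠ 0 := Complex.ofReal_ne_zero.2 Real.pi_ne_zero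
  have hξ' : (ξ : ℂ) ≠ 0 := Complex.ofReal_ne_zero.2 hξ
  have hc : (-2 * (π:ℂ) * ξ * Complex.I) ≠ 0 := by
    apply mul_ne_zero (mul_ne_zero (mul_ne_zero (by norm_num) hπ) hξ') Complex.I_ne_zero
  rw [Real.fourier_real_eq_integral_exp_smul]
  have h1 : ∀ v : ℝ, Complex.exp (↑(-2 * π * v * ξ) * Complex.I) • u v
      = Set.indicator (Set.Icc (-(1 / 2) : ℝ) (1 / 2))
          (fun v : ℝ => Complex.exp ((-2 * π * ξ * Complex.I) * v)) v := by
    intro v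
    simp only [u, Set.indicator_apply]
    split
    · rw [smul_eq_mul, mul_one]; push_cast; ring_nf
    · simp
  rw [MeasureTheory.integral_congr_ae (Filter.Eventually.of_forall h1),
    MeasureTheory.integral_indicator measurableSet_Icc,
    MeasureTheory.integral_Icc_eq_integral_Ioc,
    ← intervalIntegral.integral_of_le (by norm_num : (-(1/2):ℝ) ≤ 1/2),
    integral_exp_mul_complex hc]
  push_cast
  rw [Complex.sin]
  rw [show (-2*(π:ℂ)*ξ*Complex.I) * ((1:ℂ)/2) = -((π:ℂ)*ξ*Complex.I) by ring,
    show (-2*(π:ℂ)*ξ*Complex.I) * (-(1/2):ℂ) = (π:ℂ)*ξ*Complex.I by ring,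
    show -((π:ℂ)*ξ)*Complex.I = -((π:ℂ)*ξ*Complex.I) by ring]
  field_simp
  ring_nf
  simp [Complex.I_sq]

variable {f : ℝ → ℝ}

lemma freal (heven : ∀ x, f (-x) = f x) (ξ : ℝ) :
    𝓕 (fun x : ℝ => (f x : ℂ)) ξ = (((𝓕 (fun x : ℝ => (f x : ℂ)) ξ).re : ℝ) : ℂ) := by
  rw [eq_comm, ← Complex.conj_eq_iff_re]
  rw [Real.fourier_real_eq_integral_exp_smul, ← integral_conj,
    ← MeasureTheory.integral_neg_eq_self]
  congr 1
  ext v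
  simp only [smul_eq_mul, map_mul, ← Complex.exp_conj, Complex.conj_ofReal,
    map_mul, Complex.conj_I, heven]
  push_cast
  ring_nf

lemma feven (heven : ∀ x, f (-x) = f x) (ξ : ℝ) :
    𝓕 (fun x : ℝ => (f x : ℂ)) (-ξ) = 𝓕 (fun x : ℝ => (f x : ℂ)) ξ := by
  rw [Real.fourier_real_eq_integral_exp_smul,
    Real.fourier_real_eq_integral_exp_smul, ← MeasureTheory.integral_neg_eq_self]
  congr 1
  ext v
  simp only [smul_eq_mul, heven]
  push_cast
  ring_nf

lemma hfc_supp (hsupp : Function.support f ⊆ Set.Icc (-(1 / 2) : ℝ) (1 / 2)) :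
    HasCompactSupport (fun x : ℝ => (f x : ℂ)) := by
  apply HasCompactSupport.of_support_subset_isCompact (isCompact_Icc (a := -(1/2:ℝ)) (b := 1/2))
  intro x hx
  apply hsupp
  simp only [Function.mem_support] at hx ⊢
  exact fun h => hx (by simp [h])

lemma hfc_int (hf : ContDiff ℝ (⊤ : ℕ∞) f) (hsupp : Function.support f ⊆ Set.Icc (-(1 / 2) : ℝ) (1 / 2)) :
    Integrable (fun x : ℝ => (f x : ℂ)) :=
  (Complex.continuous_ofReal.comp hf.continuous).integrable_of_hasCompactSupport (hfc_supp hsupp)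

lemma split (hf : ContDiff ℝ (⊤ : ℕ∞) f) (hsupp : Function.support f ⊆ Set.Icc (-(1 / 2) : ℝ) (1 / 2))
    (ε : ℝ) (ξ : ℝ) :
    𝓕 (fun x : ℝ => u x + (ε : ℂ) * (f x : ℂ)) ξ
      = 𝓕 u ξ + (ε : ℂ) * 𝓕 (fun x : ℝ => (f x : ℂ)) ξ := by
  have h1 : (fun x : ℝ => u x + (ε : ℂ) * (f x : ℂ))
      = u + (ε : ℂ) • (fun x : ℝ => (f x : ℂ)) := by
    ext x; simp [smul_eq_mul]
  rw [h1]
  have hL : Continuous fun p : ℝ × ℝ => (innerₗ ℝ) p.1 p.2 := continuous_inner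
  have h2 := congrFun (VectorFourier.fourierIntegral_add (L := innerₗ ℝ) (μ := volume)
    Real.continuous_fourierChar hL hu_int ((hfc_int hf hsupp).smul (ε : ℂ))) ξ
  have h4 := congrFun (VectorFourier.fourierIntegral_const_smul Real.fourierChar volume
    (L := innerₗ ℝ) (fun x : ℝ => (f x : ℂ)) (ε : ℂ)) ξ
  simp only [Pi.add_apply, Pi.smul_apply, smul_eq_mul] at h2 h4
  exact h2.trans (by rw [h4]; rfl)

lemma gprops (hf : ContDiff ℝ (⊤ : ℕ∞) f) (hsupp : Function.support f ⊆ Set.Icc (-(1 / 2) : ℝ) (1 / 2)) :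
    ∃ B L : ℝ, 0 ≤ B ∧ 0 ≤ L ∧
      (∀ ξ : ℝ, |ξ * (𝓕 (fun x : ℝ => (f x : ℂ)) ξ).re| ≤ B) ∧
      (∀ ξ ζ : ℝ, |ξ * (𝓕 (fun x : ℝ => (f x : ℂ)) ξ).re - ζ * (𝓕 (fun x : ℝ => (f x : ℂ)) ζ).re|
          ≤ L * |ξ - ζ|) ∧
      Tendsto (fun ξ : ℝ => ξ * (𝓕 (fun x : ℝ => (f x : ℂ)) ξ).re) (cocompact ℝ) (𝓝 0) := by
  set fc : ℝ → ℂ := fun x => (f x : ℂ) with hfc_def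
  have hfc : ContDiff ℝ (⊤ : ℕ∞) fc := Complex.ofRealCLM.contDiff.comp hf
  have hfc_cont : Continuous fc := hfc.continuous
  have hsupp' : HasCompactSupport fc := hfc_supp hsupp
  have hfc_int : Integrable fc := hfc_cont.integrable_of_hasCompactSupport hsupp'
  set w : ℝ → ℂ := deriv fc with hw_def
  have hw_cont : Continuous w := hfc.continuous_deriv (by simp)
  have hw_supp : HasCompactSupport w := hsupp'.deriv
  have hw_int : Integrable w := hw_cont.integrable_of_hasCompactSupport hw_supp
  have hxw_int : Integrable (fun x : ℝ => x • w x) :=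
    (continuous_id.smul hw_cont).integrable_of_hasCompactSupport (hw_supp.smul_left)
  have hkey : ∀ ξ : ℝ, (ξ : ℂ) * 𝓕 fc ξ = 𝓕 w ξ / (2 * π * Complex.I) := by
    intro ξ
    have h := congrFun (Real.fourier_deriv hfc_int (hfc.differentiable (by simp)) hw_int) ξ
    rw [← hw_def] at h
    rw [h]
    have : (2 * (π:ℂ) * Complex.I) ≠ 0 := by
      simp [Real.pi_ne_zero, Complex.I_ne_zero, Complex.ext_iff, Real.pi_ne_zero]
    field_simp [smul_eq_mul]
    ring
  -- bound B
  set B : ℝ := (∫ x : ℝ, ‖w x‖) / (2 * π) with hB_def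
  have hB0 : 0 ≤ B := div_nonneg (integral_nonneg fun x => norm_nonneg _) (by positivity)
  have hnorm2pi : ‖(2 * (π:ℂ) * Complex.I)‖ = 2 * π := by
    simp [_root_.abs_of_nonneg Real.pi_pos.le, norm_mul]
  have hBbound : ∀ ξ : ℝ, ‖(ξ:ℂ) * 𝓕 fc ξ‖ ≤ B := by
    intro ξ
    rw [hkey ξ, norm_div, hnorm2pi, hB_def]
    gcongr
    exact VectorFourier.norm_fourierIntegral_le_integral_norm _ _ _ _ _
  -- Lipschitz bound
  have hDF : ∀ ξ : ℝ, HasDerivAt (𝓕 w) (𝓕 (fun x : ℝ => (-2 * ↑π * Complex.I * ↑x) • w x) ξ) ξ :=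
    fun ξ => Real.hasDerivAt_fourier hw_int hxw_int ξ
  set C0 : ℝ := ∫ x : ℝ, ‖(-2 * ↑π * Complex.I * (x:ℂ)) • w x‖ with hC0_def
  have hC00 : 0 ≤ C0 := integral_nonneg fun x => norm_nonneg _
  have hC : ∀ ξ : ℝ, ‖deriv (𝓕 w) ξ‖ ≤ C0 := by
    intro ξ
    rw [(hDF ξ).deriv]
    exact VectorFourier.norm_fourierIntegral_le_integral_norm _ _ _ _ _
  have hLipW : LipschitzWith C0.toNNReal (𝓕 w) := by
    apply lipschitzWith_of_nnnorm_deriv_le (fun ξ => (hDF ξ).differentiableAt)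
    intro ξ
    rw [← NNReal.coe_le_coe, coe_nnnorm, Real.coe_toNNReal _ hC00]
    exact hC ξ
  have hLip : ∀ ξ ζ : ℝ, ‖𝓕 w ξ - 𝓕 w ζ‖ ≤ C0 * |ξ - ζ| := by
    intro ξ ζ
    have := hLipW.dist_le_mul ξ ζ
    rwa [dist_eq_norm, Real.dist_eq, Real.coe_toNNReal _ hC00] at this
  set L : ℝ := C0 / (2 * π) with hL_def
  have hL0 : 0 ≤ L := div_nonneg hC00 (by positivity)
  have hre : ∀ ξ : ℝ, ξ * (𝓕 fc ξ).re = ((ξ:ℂ) * 𝓕 fc ξ).re := by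
    intro ξ; simp [Complex.mul_re]
  refine ⟨B, L, hB0, hL0, ?_, ?_, ?_⟩
  · intro ξ
    rw [hre ξ]
    exact le_trans (Complex.abs_re_le_norm _) (by exact hBbound ξ)
  · intro ξ ζ
    rw [hre ξ, hre ζ]
    have h1 : |((ξ:ℂ) * 𝓕 fc ξ).re - ((ζ:ℂ) * 𝓕 fc ζ).re|
        ≤ ‖(ξ:ℂ) * 𝓕 fc ξ - (ζ:ℂ) * 𝓕 fc ζ‖ := by
      rw [show ((ξ:ℂ) * 𝓕 fc ξ).re - ((ζ:ℂ) * 𝓕 fc ζ).re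
          = ((ξ:ℂ) * 𝓕 fc ξ - (ζ:ℂ) * 𝓕 fc ζ).re by simp [Complex.sub_re]]
      exact le_trans (Complex.abs_re_le_norm _) (by exact le_rfl)
    refine h1.trans ?_
    rw [hkey ξ, hkey ζ, div_sub_div_same, norm_div, hnorm2pi, hL_def]
    rw [div_mul_eq_mul_div, div_le_div_iff₀ (by positivity) (by positivity)]
    have := hLip ξ ζ
    nlinarith [abs_nonneg (ξ - ζ), Real.pi_pos, norm_nonneg (𝓕 w ξ - 𝓕 w ζ)]
  · have h0 : Tendsto (fun ξ : ℝ => 𝓕 w ξ / (2 * ↑π * Complex.I)) (cocompact ℝ)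
        (𝓝 (0 / (2 * ↑π * Complex.I))) :=
      (Real.zero_at_infty_fourier w).div_const _
    rw [zero_div] at h0
    have h1 : Tendsto (fun ξ : ℝ => (𝓕 w ξ / (2 * ↑π * Complex.I)).re) (cocompact ℝ) (𝓝 0) := by
      have := (Complex.continuous_re.tendsto 0).comp h0
      exact this
    refine h1.congr ?_
    intro ξ
    rw [← hkey ξ, ← hre ξ]

lemma cos_bound {θ : ℝ} (h : |θ| ≤ π / 2) : θ ^ 2 / 8 ≤ 1 - Real.cos θ := by
  wlog hθ : 0 ≤ θ generalizing θ
  · have := this (θ := -θ) (by rwa [abs_neg]) (by linarith [lt_of_not_ge hθ])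
    simpa using this
  rw [_root_.abs_of_nonneg hθ] at h
  have h1 : 2 / π * (θ / 2) ≤ Real.sin (θ / 2) :=
    Real.mul_le_sin (by linarith) (by linarith [Real.pi_pos])
  have h2 : θ / 4 ≤ θ / π := by
    rcases eq_or_lt_of_le hθ with rfl | hθ'
    · simp
    · exact div_le_div_of_nonneg_left hθ Real.pi_pos Real.pi_le_four
  have hc := Real.cos_sq (θ / 2)
  rw [show 2 * (θ / 2) = θ by ring] at hc
  have hs := Real.sin_sq (θ / 2)
  rw [hc] at hs
  have e : 2 / π * (θ / 2) = θ / π := by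
    field_simp
  have h4 : θ / π ≤ Real.sin (θ / 2) := e ▸ h1
  have h5 : 0 ≤ θ / 4 := by linarith
  nlinarith [h4, h2, h5]

lemma peak_decomp (ξ : ℝ) :
    Real.sin (π * ξ) = (-1 : ℝ) ^ (⌊ξ⌋) * Real.cos (π * (ξ - ((⌊ξ⌋ : ℝ) + 1 / 2))) := by
  have h : π * ξ = (π * (ξ - ((⌊ξ⌋ : ℝ) + 1 / 2)) + π / 2) + (⌊ξ⌋ : ℝ) * π := by ring
  rw [h, Real.sin_add_int_mul_pi, Real.sin_add_pi_div_two]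



set_option maxHeartbeats 1000000 in
lemma core_upper (g : ℝ → ℝ) (B L M : ℝ) (hB0 : 0 ≤ B) (hL0 : 0 ≤ L) (hM0 : 0 ≤ M)
    (hB : ∀ ξ, |g ξ| ≤ B) (hLip : ∀ ξ ζ, |g ξ - g ζ| ≤ L * |ξ - ζ|)
    (hM : ∀ m : ℤ, (-1 : ℝ) ^ m * g ((m : ℝ) + 1 / 2) ≤ M)
    (η : ℝ) (hη : 0 < η) :
    ∃ ε₀ > 0, ∀ ε : ℝ, 0 < ε → ε ≤ ε₀ →
      ∀ ξ : ℝ, |Real.sin (π * ξ) / π + ε * g ξ| ≤ 1 / π + ε * (M + η) := by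
  have hπ := Real.pi_pos
  refine ⟨min (1 / (π * (B + 1))) (η ^ 2 * π / (8 * (L + 1) ^ 2 * (B + M + η))),
    lt_min (by positivity) (by positivity), ?_⟩
  intro ε hε hε₀ ξ
  have hε1 : ε ≤ 1 / (π * (B + 1)) := hε₀.trans (min_le_left _ _)
  have hε2 : ε ≤ η ^ 2 * π / (8 * (L + 1) ^ 2 * (B + M + η)) := hε₀.trans (min_le_right _ _)
  clear hε₀
  set m : ℤ := ⌊ξ⌋ with hm
  set p : ℝ := (m : ℝ) + 1 / 2 with hp
  set θ : ℝ := π * (ξ - p) with hθdef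
  set σ : ℝ := (-1 : ℝ) ^ m with hσdef
  have hfl1 : (m : ℝ) ≤ ξ := Int.floor_le ξ
  have hfl2 : ξ < (m : ℝ) + 1 := Int.lt_floor_add_one ξ
  have hsin : Real.sin (π * ξ) = σ * Real.cos θ := peak_decomp ξ
  have hσ : σ = 1 ∨ σ = -1 := by
    rcases Int.even_or_odd m with he | ho
    · exact Or.inl (Even.neg_one_zpow he)
    · exact Or.inr (Odd.neg_one_zpow ho)
  have hgp : σ * g p ≤ M := hM m
  have hDle : |ξ - p| ≤ 1 / 2 := by
    rw [abs_le, hp]; constructor <;> linarith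
  have hθeq : θ = π * (ξ - p) := hθdef
  clear_value m p θ σ
  clear hm hp hσdef hθdef hfl1 hfl2
  have hθle : |θ| ≤ π / 2 := by
    rw [hθeq, abs_mul, _root_.abs_of_pos hπ]
    calc π * |ξ - p| ≤ π * (1/2) := by gcongr
    _ = π / 2 := by ring
  have hcos0 : 0 ≤ Real.cos θ :=
    Real.cos_nonneg_of_mem_Icc (by rw [Set.mem_Icc, ← abs_le]; exact hθle)
  have hcos1 : Real.cos θ ≤ 1 := Real.cos_le_one θ
  have hrw : Real.sin (π * ξ) / π + ε * g ξ = σ * (Real.cos θ / π + ε * (σ * g ξ)) := by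
    rcases hσ with h | h <;> rw [hsin, h] <;> ring
  have habsσ : ∀ y : ℝ, |σ * y| = |y| := by
    intro y; rcases hσ with h | h <;> simp [h, abs_mul]
  rw [hrw, habsσ]
  have hgb : |σ * g ξ| ≤ B := by rw [habsσ]; exact hB ξ
  have hσg1 : -B ≤ σ * g ξ := neg_le_of_abs_le hgb
  have hσg2 : σ * g ξ ≤ B := le_of_abs_le hgb
  have hεB : ε * B < 1 / π := by
    have h1 : ε * (π * (B + 1)) ≤ 1 := (le_div_iff₀ (by positivity)).1 hε1
    have h2 : ε * (π * (B + 1)) = ε * B * π + ε * π := by ring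
    have h3 : 0 < ε * π := mul_pos hε hπ
    rw [lt_div_iff₀ hπ]
    linarith
  have hMη : 0 ≤ ε * (M + η) := mul_nonneg hε.le (by linarith)
  rw [abs_le]
  constructor
  · have h1 : ε * (-B) ≤ ε * (σ * g ξ) := mul_le_mul_of_nonneg_left hσg1 hε.le
    have h2 : ε * (-B) = -(ε * B) := by ring
    have h3 : (0:ℝ) ≤ Real.cos θ / π := by positivity
    linarith
  · by_cases hcase : Real.cos θ ≤ 1 - π * ε * (B + M + η)
    · have h2 : Real.cos θ / π ≤ 1 / π - ε * (B + M + η) := by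
        rw [div_le_iff₀ hπ]
        have h4 : (1 / π - ε * (B + M + η)) * π = 1 - π * ε * (B + M + η) := by
          field_simp
        rw [h4]; exact hcase
      have h3 : ε * (σ * g ξ) ≤ ε * B := mul_le_mul_of_nonneg_left hσg2 hε.le
      have h4 : ε * (B + M + η) = ε * B + ε * (M + η) := by ring
      linarith
    · push_neg at hcase
      have ht : 1 - Real.cos θ < π * ε * (B + M + η) := by linarith
      have hθ2 : θ ^ 2 / 8 ≤ 1 - Real.cos θ := cos_bound hθle
      have hD2 : (ξ - p) ^ 2 < 8 * ε * (B + M + η) / π := by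
        have he : θ ^ 2 = π ^ 2 * (ξ - p) ^ 2 := by rw [hθeq]; ring
        have k1 : π ^ 2 * (ξ - p) ^ 2 < 8 * (π * ε * (B + M + η)) := by
          rw [← he]; linarith
        rw [lt_div_iff₀ hπ]
        nlinarith [k1, hπ, sq_nonneg (ξ - p)]
      have hLD : L * |ξ - p| ≤ η := by
        have h2 : ε * (8 * (L + 1) ^ 2 * (B + M + η)) ≤ η ^ 2 * π :=
          (le_div_iff₀ (by positivity)).1 hε2
        have hsq : (L * |ξ - p|) ^ 2 ≤ η ^ 2 := by
          have h1 : (L * |ξ - p|) ^ 2 = L ^ 2 * (ξ - p) ^ 2 := by rw [mul_pow, _root_.sq_abs]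
          rw [h1]
          have h3 : L ^ 2 * (ξ - p) ^ 2 ≤ (L + 1) ^ 2 * (ξ - p) ^ 2 := by
            nlinarith [sq_nonneg (ξ - p)]
          have h4 : (L + 1) ^ 2 * (ξ - p) ^ 2 ≤ (L + 1) ^ 2 * (8 * ε * (B + M + η) / π) := by
            exact mul_le_mul_of_nonneg_left hD2.le (by positivity)
          have h5 : (L + 1) ^ 2 * (8 * ε * (B + M + η) / π) ≤ η ^ 2 := by
            rw [show (L + 1) ^ 2 * (8 * ε * (B + M + η) / π)
                = ((L + 1) ^ 2 * (8 * ε * (B + M + η))) / π by ring, div_le_iff₀ hπ]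
            have h6 : (L + 1) ^ 2 * (8 * ε * (B + M + η))
                = ε * (8 * (L + 1) ^ 2 * (B + M + η)) := by ring
            linarith
          linarith
        exact le_of_pow_le_pow_left₀ two_ne_zero hη.le hsq
      have hdiff : σ * g ξ - σ * g p ≤ L * |ξ - p| := by
        calc σ * g ξ - σ * g p = σ * (g ξ - g p) := by ring
        _ ≤ |σ * (g ξ - g p)| := le_abs_self _
        _ = |g ξ - g p| := habsσ _
        _ ≤ L * |ξ - p| := hLip ξ p
      have hfin : σ * g ξ ≤ M + η := by linarith
      have hc : Real.cos θ / π ≤ 1 / π := by gcongr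
      have h7 : ε * (σ * g ξ) ≤ ε * (M + η) := mul_le_mul_of_nonneg_left hfin hε.le
      linarith

lemma peak_le (G : ℝ → ℝ) (hodd : ∀ ξ : ℝ, G (-ξ) = -G ξ) (B : ℝ) (hB : ∀ ξ, |G ξ| ≤ B) :
    ∀ m : ℤ, (-1 : ℝ) ^ m * G ((m : ℝ) + 1 / 2)
      ≤ max (⨆ k : ℕ, G (2 * (k : ℝ) + 1 / 2)) (-(⨅ k : ℕ, G (2 * (k : ℝ) + 3 / 2))) := by
  intro m
  set M := max (⨆ k : ℕ, G (2 * (k : ℝ) + 1 / 2)) (-(⨅ k : ℕ, G (2 * (k : ℝ) + 3 / 2))) with hM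
  have bdd1 : BddAbove (Set.range fun k : ℕ => G (2 * (k : ℝ) + 1 / 2)) :=
    ⟨B, by rintro x ⟨k, rfl⟩; exact le_of_abs_le (hB _)⟩
  have bdd2 : BddBelow (Set.range fun k : ℕ => G (2 * (k : ℝ) + 3 / 2)) :=
    ⟨-B, by rintro x ⟨k, rfl⟩; exact neg_le_of_abs_le (hB _)⟩
  have h1 : ∀ k : ℕ, G (2 * (k : ℝ) + 1 / 2) ≤ M :=
    fun k => le_trans (le_ciSup bdd1 k) (le_max_left _ _)
  have h2 : ∀ k : ℕ, -G (2 * (k : ℝ) + 3 / 2) ≤ M :=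
    fun k => le_trans (neg_le_neg (ciInf_le bdd2 k)) (le_max_right _ _)
  rcases Int.even_or_odd m with ⟨n, hn⟩ | ⟨n, hn⟩
  · subst hn
    rw [Even.neg_one_zpow ⟨n, rfl⟩, one_mul]
    rcases le_or_gt 0 n with hn0 | hn0
    · have hc : ((n.toNat : ℕ) : ℝ) = (n : ℝ) := by exact_mod_cast Int.toNat_of_nonneg hn0
      have e : ((n + n : ℤ) : ℝ) + 1 / 2 = 2 * ((n.toNat : ℕ) : ℝ) + 1 / 2 := by
        rw [hc]; push_cast; ring
      rw [e]; exact h1 _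
    · have hk : (0 : ℤ) ≤ -n - 1 := by omega
      have hc : (((-n - 1).toNat : ℕ) : ℝ) = -(n : ℝ) - 1 := by
        exact_mod_cast Int.toNat_of_nonneg hk
      have e : ((n + n : ℤ) : ℝ) + 1 / 2 = -(2 * (((-n - 1).toNat : ℕ) : ℝ) + 3 / 2) := by
        rw [hc]; push_cast; ring
      rw [e, hodd]; exact h2 _
  · subst hn
    rw [Odd.neg_one_zpow ⟨n, rfl⟩, neg_one_mul]
    rcases le_or_gt 0 n with hn0 | hn0
    · have hc : ((n.toNat : ℕ) : ℝ) = (n : ℝ) := by exact_mod_cast Int.toNat_of_nonneg hn0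
      have e : ((2 * n + 1 : ℤ) : ℝ) + 1 / 2 = 2 * ((n.toNat : ℕ) : ℝ) + 3 / 2 := by
        rw [hc]; push_cast; ring
      rw [e]; exact h2 _
    · have hk : (0 : ℤ) ≤ -n - 1 := by omega
      have hc : (((-n - 1).toNat : ℕ) : ℝ) = -(n : ℝ) - 1 := by
        exact_mod_cast Int.toNat_of_nonneg hk
      have e : ((2 * n + 1 : ℤ) : ℝ) + 1 / 2 = -(2 * (((-n - 1).toNat : ℕ) : ℝ) + 1 / 2) := by
        rw [hc]; push_cast; ring
      rw [e, hodd, neg_neg]; exact h1 _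

lemma sin_peak1 (k : ℕ) : Real.sin (π * (2 * (k : ℝ) + 1 / 2)) = 1 := by
  have h : π * (2 * (k : ℝ) + 1 / 2) = π / 2 + ((2 * (k : ℤ) : ℤ) : ℝ) * π := by push_cast; ring
  rw [h, Real.sin_add_int_mul_pi, Real.sin_pi_div_two,
    Even.neg_one_zpow ⟨(k : ℤ), by ring⟩, mul_one]

lemma sin_peak2 (k : ℕ) : Real.sin (π * (2 * (k : ℝ) + 3 / 2)) = -1 := by
  have h : π * (2 * (k : ℝ) + 3 / 2) = -(π / 2) + ((2 * (k : ℤ) + 2 : ℤ) : ℝ) * π := by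
    push_cast; ring
  rw [h, Real.sin_add_int_mul_pi, Even.neg_one_zpow ⟨(k : ℤ) + 1, by ring⟩, one_mul,
    Real.sin_neg, Real.sin_pi_div_two]

end Stmt18aux

end

open Complex Topology

/-- First variation of `‖ξ · v̂(ξ)‖_{L^∞}` at `u = χ_{[-1/2,1/2]}` in the direction of a smooth
even `f` supported in `[-1/2,1/2]`:
`lim_{ε→0⁺} (‖ξ(û + εf̂)‖_∞ - 1/π)/ε = M(f)`. -/
theorem stmt18 (f : ℝ → ℝ) (hf : ContDiff ℝ (⊤ : ℕ∞) f) (heven : ∀ x, f (-x) = f x)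
    (hsupp : Function.support f ⊆ Set.Icc (-(1 / 2) : ℝ) (1 / 2)) :
    Tendsto (fun ε : ℝ =>
        ((⨆ ξ : ℝ, ‖(ξ : ℂ) *
            𝓕 (fun x : ℝ => Set.indicator (Set.Icc (-(1 / 2) : ℝ) (1 / 2)) (fun _ => (1 : ℂ)) x
                + (ε : ℂ) * (f x : ℂ)) ξ‖) - 1 / π) / ε)
      (nhdsWithin 0 (Set.Ioi 0)) (nhds (maxHat f)) := by
  classical
  open Stmt18aux in
  have hπ := Real.pi_pos
  set G : ℝ → ℝ := fun ξ => ξ * (𝓕 (fun x : ℝ => (f x : ℂ)) ξ).re with hG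
  obtain ⟨B, L, hB0, hL0, hB, hLip, htend⟩ := Stmt18aux.gprops hf hsupp
  have hodd : ∀ ξ : ℝ, G (-ξ) = -G ξ := by
    intro ξ
    simp only [hG, Stmt18aux.feven heven ξ]
    ring
  have hMdef : maxHat f
      = max (⨆ k : ℕ, G (2 * (k : ℝ) + 1 / 2)) (-(⨅ k : ℕ, G (2 * (k : ℝ) + 3 / 2))) := rfl
  have hM : ∀ m : ℤ, (-1 : ℝ) ^ m * G ((m : ℝ) + 1 / 2) ≤ maxHat f := by
    rw [hMdef]
    exact Stmt18aux.peak_le G hodd B hB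
  have bdd1 : BddAbove (Set.range fun k : ℕ => G (2 * (k : ℝ) + 1 / 2)) :=
    ⟨B, by rintro x ⟨k, rfl⟩; exact le_of_abs_le (hB _)⟩
  have hM0 : 0 ≤ maxHat f := by
    have hseq : Tendsto (fun k : ℕ => G (2 * (k : ℝ) + 1 / 2)) atTop (𝓝 0) := by
      apply htend.comp
      have h1 : Tendsto (fun k : ℕ => 2 * (k : ℝ) + 1 / 2) atTop atTop := by
        apply tendsto_atTop_add_const_right
        exact tendsto_natCast_atTop_atTop.const_mul_atTop (by norm_num)
      rw [cocompact_eq_atBot_atTop]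
      exact h1.mono_right le_sup_right
    have h0S : 0 ≤ ⨆ k : ℕ, G (2 * (k : ℝ) + 1 / 2) :=
      le_of_tendsto hseq (Eventually.of_forall fun k => le_ciSup bdd1 k)
    rw [hMdef]
    exact h0S.trans (le_max_left _ _)
  have hnorm : ∀ ε ξ : ℝ, ‖(ξ : ℂ) *
      𝓕 (fun x : ℝ => Set.indicator (Set.Icc (-(1 / 2) : ℝ) (1 / 2)) (fun _ => (1 : ℂ)) x
          + (ε : ℂ) * (f x : ℂ)) ξ‖ = |Real.sin (π * ξ) / π + ε * G ξ| := by
    intro ε ξ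
    show ‖(ξ : ℂ) * 𝓕 (fun x : ℝ => Stmt18aux.u x + (ε : ℂ) * (f x : ℂ)) ξ‖ = _
    rw [Stmt18aux.split hf hsupp ε ξ, mul_add, Stmt18aux.sinc ξ,
      Stmt18aux.freal heven ξ]
    rw [show ((Real.sin (π * ξ) / π : ℝ) : ℂ)
          + (ξ : ℂ) * ((ε : ℂ) * (((𝓕 (fun x : ℝ => (f x : ℂ)) ξ).re : ℝ) : ℂ))
        = ((Real.sin (π * ξ) / π + ε * G ξ : ℝ) : ℂ) by rw [hG]; push_cast; ring]
    exact Complex.norm_real _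
  rw [Metric.tendsto_nhdsWithin_nhds]
  intro δ hδ
  obtain ⟨ε₀, hε₀pos, hup⟩ := Stmt18aux.core_upper G B L (maxHat f) hB0 hL0 hM0 hB hLip hM
    (δ / 2) (by positivity)
  refine ⟨ε₀, hε₀pos, ?_⟩
  intro ε hεIoi hεd
  have hε : 0 < ε := hεIoi
  have hεle : ε ≤ ε₀ := by
    rw [Real.dist_eq, sub_zero, _root_.abs_of_pos hε] at hεd; exact hεd.le
  have hupε := hup ε hε hεle
  simp only [hnorm]
  set Sup : ℝ := ⨆ ξ : ℝ, |Real.sin (π * ξ) / π + ε * G ξ| with hSup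
  have bddQ : BddAbove (Set.range fun ξ : ℝ => |Real.sin (π * ξ) / π + ε * G ξ|) :=
    ⟨1 / π + ε * (maxHat f + δ / 2), by rintro x ⟨ξ, rfl⟩; exact hupε ξ⟩
  have hSle : Sup ≤ 1 / π + ε * (maxHat f + δ / 2) := ciSup_le fun ξ => hupε ξ
  have h1k : ∀ k : ℕ, 1 / π + ε * G (2 * (k : ℝ) + 1 / 2) ≤ Sup := by
    intro k
    have h := le_ciSup bddQ (2 * (k : ℝ) + 1 / 2)
    rw [Stmt18aux.sin_peak1 k] at h
    exact le_trans (le_abs_self _) (by rw [one_div] at h ⊢; exact h)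
  have h2k : ∀ k : ℕ, 1 / π - ε * G (2 * (k : ℝ) + 3 / 2) ≤ Sup := by
    intro k
    have h := le_ciSup bddQ (2 * (k : ℝ) + 3 / 2)
    rw [Stmt18aux.sin_peak2 k] at h
    refine le_trans ?_ h
    have h2 := neg_le_abs (-1 / π + ε * G (2 * (k : ℝ) + 3 / 2))
    have e : -(-1 / π + ε * G (2 * (k : ℝ) + 3 / 2))
        = 1 / π - ε * G (2 * (k : ℝ) + 3 / 2) := by ring
    linarith
  have hlow : maxHat f ≤ (Sup - 1 / π) / ε := by
    rw [hMdef]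
    apply max_le
    · apply ciSup_le
      intro k
      rw [le_div_iff₀ hε]
      have := h1k k
      nlinarith
    · have hinf : (1 / π - Sup) / ε ≤ ⨅ k : ℕ, G (2 * (k : ℝ) + 3 / 2) := by
        apply le_ciInf
        intro k
        rw [div_le_iff₀ hε]
        have := h2k k
        nlinarith
      have : -(⨅ k : ℕ, G (2 * (k : ℝ) + 3 / 2)) ≤ -((1 / π - Sup) / ε) := neg_le_neg hinf
      refine this.trans (le_of_eq ?_)
      rw [← neg_div]
      ring_nf
  have hhigh : (Sup - 1 / π) / ε ≤ maxHat f + δ / 2 := by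
    rw [div_le_iff₀ hε]
    nlinarith
  rw [Real.dist_eq]
  have : |(Sup - 1 / π) / ε - maxHat f| ≤ δ / 2 := by
    rw [abs_le]
    constructor <;> linarith
  linarith
end
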